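/- Let q, a, b be real numbers with q > 0 and a, b > 1, and let x ∈ (0,1). Define ψ(p) = ( Φ_{p,q}(a,b;x) / ((1+a)^p (1+b)^q) − x/(1−x) ) · (x−1)/(p x) for p > 0. Then ψ is logarithmically convex on (0,∞); that is, for all p₁, p₂ > 0 and α ∈ (0,1), ψ(α p₁ + (1−α) p₂) ≤ ψ(p₁)^α ψ(p₂)^{1−α}. -/

import Mathlib

/-!
With `c_k = k + 1 + a` and `d_k = k + 1 + b`, subtracting the geometric series gives
`ψ(p) = (1 - x) / x * ∑ₖ x ^ (k + 1) * (1 - d_k ^ (-q) * exp (-p log c_k)) / p`.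
Each summand is log-convex in `p`: for `L > 0` and `D ≤ 1` the second derivative of
`log (1 - D e^(-L p)) - log p` is `p⁻² - D L² e^(-L p) / (1 - D e^(-L p))²`, which is nonnegative
because `t e^(-t/2) ≤ 1 - e^(-t)` (that is, `t ≤ 2 sinh (t / 2)`). Hölder's inequality with
exponents `1/α`, `1/(1 - α)` shows that a convergent sum of log-convex functions is log-convex.
-/

/-- The generalized polylogarithm with real parameters. -/
noncomputable def genPolylogR (p q a b x : ℝ) : ℝ :=
  ∑' k : ℕ, ((1 + a) ^ p * (1 + b) ^ q /
      (((k : ℝ) + 1 + a) ^ p * ((k : ℝ) + 1 + b) ^ q)) * x ^ (k + 1)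

/-- The function `ψ(p)` built from the generalized polylogarithm. -/
noncomputable def psiFun (q a b x : ℝ) (p : ℝ) : ℝ :=
  (genPolylogR p q a b x / ((1 + a) ^ p * (1 + b) ^ q) - x / (1 - x)) * (x - 1) / (p * x)

open Real Set

lemma mul_exp_neg_half_le_one_sub_exp_neg {t : ℝ} (ht : 0 ≤ t) :
    t * exp (-(t / 2)) ≤ 1 - exp (-t) := by
  have hsinh : t / 2 ≤ sinh (t / 2) := self_le_sinh_iff.mpr (by positivity)
  rw [sinh_eq] at hsinh
  have hprod : exp (t / 2) * exp (-(t / 2)) = 1 := by rw [← exp_add]; simp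
  have hsq : exp (-t) = exp (-(t / 2)) ^ 2 := by rw [sq, ← exp_add]; ring_nf
  nlinarith [exp_pos (-(t / 2))]

lemma one_sub_mul_exp_neg_pos {D t : ℝ} (hD1 : D ≤ 1) (ht : 0 < t) :
    0 < 1 - D * exp (-t) := by
  have : exp (-t) < 1 := exp_lt_one_iff.mpr (neg_lt_zero.mpr ht)
  nlinarith [exp_pos (-t)]

lemma mul_sq_mul_exp_neg_le_sq {D t : ℝ} (hD1 : D ≤ 1) (ht : 0 ≤ t) :
    D * t ^ 2 * exp (-t) ≤ (1 - D * exp (-t)) ^ 2 := by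
  have hexp : exp (-t) ≤ 1 := exp_le_one_iff.mpr (neg_nonpos.mpr ht)
  have hexp0 := exp_pos (-t)
  calc D * t ^ 2 * exp (-t) ≤ t ^ 2 * exp (-t) := by
        nlinarith [mul_nonneg (sq_nonneg t) hexp0.le]
    _ = (t * exp (-(t / 2))) ^ 2 := by rw [mul_pow, ← exp_nat_mul]; ring_nf
    _ ≤ (1 - exp (-t)) ^ 2 :=
        pow_le_pow_left₀ (by positivity) (mul_exp_neg_half_le_one_sub_exp_neg ht) 2
    _ ≤ (1 - D * exp (-t)) ^ 2 := pow_le_pow_left₀ (by linarith) (by nlinarith) 2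

lemma convexOn_log_one_sub_mul_exp_neg_div {L D : ℝ} (hL : 0 < L) (hD1 : D ≤ 1) :
    ConvexOn ℝ (Ioi 0) fun p => log ((1 - D * exp (-(L * p))) / p) := by
  set u : ℝ → ℝ := fun p => 1 - D * exp (-(L * p))
  have hu : ∀ p ∈ Ioi (0 : ℝ), 0 < u p := fun p hp =>
    one_sub_mul_exp_neg_pos hD1 (mul_pos hL hp)
  have hexp (p : ℝ) : HasDerivAt (fun p => exp (-(L * p))) (exp (-(L * p)) * -(L * 1)) p :=
    ((hasDerivAt_id p).const_mul L).neg.exp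
  have hu' (p : ℝ) : HasDerivAt u (D * L * exp (-(L * p))) p :=
    (((hexp p).const_mul D).const_sub 1).congr_deriv (by ring)
  have hf' (p : ℝ) (hp : p ∈ Ioi 0) : HasDerivAt (fun p => log (u p) - log p)
      (D * L * exp (-(L * p)) / u p - p⁻¹) p :=
    ((hu' p).log (hu p hp).ne').sub (hasDerivAt_log (ne_of_gt hp))
  have hf'' (p : ℝ) (hp : p ∈ Ioi 0) : HasDerivAt (fun p => D * L * exp (-(L * p)) / u p - p⁻¹)
      ((p ^ 2)⁻¹ - D * L ^ 2 * exp (-(L * p)) / u p ^ 2) p :=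
    ((((hexp p).const_mul (D * L)).div (hu' p) (hu p hp).ne').sub
      (hasDerivAt_inv (ne_of_gt hp))).congr_deriv (by ring)
  refine ConvexOn.congr ?_ fun p hp => (log_div (hu p hp).ne' (ne_of_gt hp)).symm
  refine convexOn_of_hasDerivWithinAt2_nonneg (convex_Ioi 0)
    (fun p hp => (hf' p hp).continuousAt.continuousWithinAt)
    (fun p hp => (hf' p (interior_subset hp)).hasDerivWithinAt)
    (fun p hp => (hf'' p (interior_subset hp)).hasDerivWithinAt) fun p hp => ?_
  replace hp : 0 < p := interior_subset hp
  rw [sub_nonneg, div_le_iff₀ (pow_pos (hu p hp) 2), inv_mul_eq_div, le_div_iff₀ (pow_pos hp 2)]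
  calc D * L ^ 2 * exp (-(L * p)) * p ^ 2 = D * (L * p) ^ 2 * exp (-(L * p)) := by ring
    _ ≤ u p ^ 2 := mul_sq_mul_exp_neg_le_sq hD1 (mul_pos hL hp).le

lemma le_rpow_mul_rpow_of_convexOn_log {E : Type*} [AddCommGroup E] [Module ℝ E] {s : Set E}
    {f : E → ℝ} (hf : ConvexOn ℝ s fun x => log (f x)) (hpos : ∀ x ∈ s, 0 < f x) {x y : E}
    (hx : x ∈ s) (hy : y ∈ s) {α : ℝ} (hα0 : 0 ≤ α) (hα1 : α ≤ 1) :
    f (α • x + (1 - α) • y) ≤ f x ^ α * f y ^ (1 - α) := by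
  have hxy : α • x + (1 - α) • y ∈ s := hf.1 hx hy hα0 (sub_nonneg.2 hα1) (by ring)
  calc f (α • x + (1 - α) • y) = exp (log (f (α • x + (1 - α) • y))) :=
        (exp_log (hpos _ hxy)).symm
    _ ≤ exp (α * log (f x) + (1 - α) * log (f y)) :=
        exp_le_exp.2 (hf.2 hx hy hα0 (sub_nonneg.2 hα1) (by ring))
    _ = f x ^ α * f y ^ (1 - α) := by
        rw [exp_add, rpow_def_of_pos (hpos x hx), rpow_def_of_pos (hpos y hy), mul_comm α,
          mul_comm (1 - α)]

lemma mul_rpow_mul_mul_rpow_one_sub {c u v : ℝ} (hc : 0 ≤ c) (hu : 0 ≤ u) (hv : 0 ≤ v) (α : ℝ) :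
    (c * u) ^ α * (c * v) ^ (1 - α) = c * (u ^ α * v ^ (1 - α)) := by
  have hcc : c ^ α * c ^ (1 - α) = c := by
    rw [← rpow_add' hc (by norm_num), add_sub_cancel, rpow_one]
  rw [mul_rpow hc hu, mul_rpow hc hv]
  linear_combination u ^ α * v ^ (1 - α) * hcc

lemma tsum_le_tsum_rpow_mul_tsum_rpow {ι : Type*} {f g h : ι → ℝ} {α : ℝ} (hα0 : 0 < α)
    (hα1 : α < 1) (hf : ∀ i, 0 ≤ f i) (hg : ∀ i, 0 ≤ g i) (hf_sum : Summable f)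
    (hg_sum : Summable g) (hfgh : ∀ i, h i ≤ f i ^ α * g i ^ (1 - α)) :
    ∑' i, h i ≤ (∑' i, f i) ^ α * (∑' i, g i) ^ (1 - α) := by
  have hf_rpow (i : ι) : (f i ^ α) ^ α⁻¹ = f i := rpow_rpow_inv (hf i) hα0.ne'
  have hg_rpow (i : ι) : (g i ^ (1 - α)) ^ (1 - α)⁻¹ = g i :=
    rpow_rpow_inv (hg i) (sub_pos.2 hα1).ne'
  obtain ⟨hfg_sum, hholder⟩ := summable_and_inner_le_Lp_mul_Lq_tsum_of_nonneg
    (HolderConjugate.inv_one_sub_inv hα0 hα1) (fun i => rpow_nonneg (hf i) α)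
    (fun i => rpow_nonneg (hg i) (1 - α)) (by simpa only [hf_rpow] using hf_sum)
    (by simpa only [hg_rpow] using hg_sum)
  simp only [hf_rpow, hg_rpow, one_div, inv_inv] at hholder
  by_cases hh_sum : Summable h
  · exact (hh_sum.tsum_le_tsum hfgh hfg_sum).trans hholder
  · rw [tsum_eq_zero_of_not_summable hh_sum]
    exact mul_nonneg (rpow_nonneg (tsum_nonneg hf) _) (rpow_nonneg (tsum_nonneg hg) _)

noncomputable def polylogWeight (q a b p : ℝ) (k : ℕ) : ℝ :=
  ((k : ℝ) + 1 + a) ^ (-p) * ((k : ℝ) + 1 + b) ^ (-q)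

noncomputable def psiTerm (q a b x p : ℝ) (k : ℕ) : ℝ :=
  x ^ (k + 1) * ((1 - polylogWeight q a b p k) / p)

section

variable {q a b x p : ℝ}

lemma genPolylogR_eq_tsum (ha : -1 ≤ a) (hb : -1 ≤ b) :
    genPolylogR p q a b x =
      (1 + a) ^ p * (1 + b) ^ q * ∑' k, polylogWeight q a b p k * x ^ (k + 1) := by
  rw [genPolylogR, ← tsum_mul_left]
  refine tsum_congr fun k => ?_
  have hk : (0 : ℝ) ≤ k := k.cast_nonneg
  rw [polylogWeight, rpow_neg (by linarith), rpow_neg (by linarith)]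
  ring

lemma polylogWeight_nonneg (ha : 0 ≤ a) (hb : 0 ≤ b) (k : ℕ) : 0 ≤ polylogWeight q a b p k := by
  unfold polylogWeight
  positivity

lemma polylogWeight_le_one (ha : 0 ≤ a) (hb : 0 ≤ b) (hp : 0 ≤ p) (hq : 0 ≤ q) (k : ℕ) :
    polylogWeight q a b p k ≤ 1 := by
  have hk : (0 : ℝ) ≤ k := k.cast_nonneg
  exact mul_le_one₀ (rpow_le_one_of_one_le_of_nonpos (by linarith) (by linarith))
    (by positivity) (rpow_le_one_of_one_le_of_nonpos (by linarith) (by linarith))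

lemma polylogWeight_eq_mul_exp (ha : -1 < a) (k : ℕ) :
    polylogWeight q a b p k = ((k : ℝ) + 1 + b) ^ (-q) * exp (-(log ((k : ℝ) + 1 + a) * p)) := by
  have hk : (0 : ℝ) ≤ k := k.cast_nonneg
  rw [polylogWeight, rpow_def_of_pos (by linarith), mul_comm, mul_neg]

lemma psiTerm_nonneg (ha : 0 ≤ a) (hb : 0 ≤ b) (hp : 0 ≤ p) (hq : 0 ≤ q) (hx : 0 ≤ x)
    (k : ℕ) : 0 ≤ psiTerm q a b x p k :=
  mul_nonneg (pow_nonneg hx _) (div_nonneg (sub_nonneg.2 (polylogWeight_le_one ha hb hp hq k)) hp)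

lemma hasSum_pow_succ (hx0 : 0 ≤ x) (hx1 : x < 1) :
    HasSum (fun k : ℕ => x ^ (k + 1)) (x / (1 - x)) := by
  simpa only [pow_succ', div_eq_mul_inv] using (hasSum_geometric_of_lt_one hx0 hx1).mul_left x

lemma summable_psiTerm (ha : 0 ≤ a) (hb : 0 ≤ b) (hp : 0 ≤ p) (hq : 0 ≤ q) (hx0 : 0 ≤ x)
    (hx1 : x < 1) : Summable (psiTerm q a b x p) := by
  refine ((hasSum_pow_succ hx0 hx1).summable.mul_right p⁻¹).of_nonneg_of_le
    (psiTerm_nonneg ha hb hp hq hx0) fun k => ?_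
  rw [psiTerm, ← one_div]
  gcongr
  linarith [polylogWeight_nonneg (q := q) (p := p) ha hb k]

lemma psiFun_eq_tsum (ha : 0 ≤ a) (hb : 0 ≤ b) (hp : 0 < p) (hq : 0 ≤ q) (hx0 : 0 < x)
    (hx1 : x < 1) : psiFun q a b x p = (1 - x) / x * ∑' k, psiTerm q a b x p k := by
  have hgeom := hasSum_pow_succ hx0.le hx1
  have hw : Summable fun k => polylogWeight q a b p k * x ^ (k + 1) :=
    hgeom.summable.of_nonneg_of_le
      (fun k => mul_nonneg (polylogWeight_nonneg ha hb k) (by positivity))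
      fun k => mul_le_of_le_one_left (by positivity) (polylogWeight_le_one ha hb hp.le hq k)
  have hN : (1 + a) ^ p * (1 + b) ^ q ≠ 0 := by positivity
  rw [psiFun, genPolylogR_eq_tsum (by linarith) (by linarith), mul_div_cancel_left₀ _ hN,
    ← hgeom.tsum_eq, ← hw.tsum_sub hgeom.summable, ← tsum_mul_left, mul_div_assoc,
    ← tsum_mul_right]
  refine tsum_congr fun k => ?_
  rw [psiTerm]
  field_simp
  ring

lemma psiTerm_le_rpow_mul_rpow (ha : 0 < a) (hb : 0 ≤ b) (hq : 0 ≤ q) (hx : 0 ≤ x)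
    {p₁ p₂ α : ℝ} (hp₁ : 0 < p₁) (hp₂ : 0 < p₂) (hα0 : 0 ≤ α) (hα1 : α ≤ 1) (k : ℕ) :
    psiTerm q a b x (α * p₁ + (1 - α) * p₂) k ≤
      psiTerm q a b x p₁ k ^ α * psiTerm q a b x p₂ k ^ (1 - α) := by
  have hk : (0 : ℝ) ≤ k := k.cast_nonneg
  set L := log ((k : ℝ) + 1 + a)
  set D := ((k : ℝ) + 1 + b) ^ (-q)
  have hL : 0 < L := log_pos (by linarith)
  have hD1 : D ≤ 1 := rpow_le_one_of_one_le_of_nonpos (by linarith) (by linarith)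
  have hpos (p : ℝ) (hp : p ∈ Ioi 0) : 0 < (1 - D * exp (-(L * p))) / p :=
    div_pos (one_sub_mul_exp_neg_pos hD1 (mul_pos hL hp)) hp
  simp only [psiTerm, polylogWeight_eq_mul_exp (by linarith : -1 < a)]
  rw [mul_rpow_mul_mul_rpow_one_sub (pow_nonneg hx _) (hpos p₁ hp₁).le (hpos p₂ hp₂).le]
  exact mul_le_mul_of_nonneg_left (le_rpow_mul_rpow_of_convexOn_log
    (convexOn_log_one_sub_mul_exp_neg_div hL hD1) hpos hp₁ hp₂ hα0 hα1) (pow_nonneg hx _)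

end

theorem psi_log_convex
    (q a b x : ℝ) (hq : 0 < q) (ha : 1 < a) (hb : 1 < b) (hx : x ∈ Set.Ioo (0 : ℝ) 1) :
    ∀ p₁ p₂ : ℝ, 0 < p₁ → 0 < p₂ → ∀ α ∈ Set.Ioo (0 : ℝ) 1,
      psiFun q a b x (α * p₁ + (1 - α) * p₂) ≤
        (psiFun q a b x p₁) ^ α * (psiFun q a b x p₂) ^ (1 - α) := by
  obtain ⟨hx0, hx1⟩ := hx
  rintro p₁ p₂ hp₁ hp₂ α ⟨hα0, hα1⟩
  have ha0 : 0 ≤ a := by linarith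
  have hb0 : 0 ≤ b := by linarith
  have hp : 0 < α * p₁ + (1 - α) * p₂ := by nlinarith
  have hsum_nonneg {p : ℝ} (hp : 0 < p) : 0 ≤ ∑' k, psiTerm q a b x p k :=
    tsum_nonneg (psiTerm_nonneg ha0 hb0 hp.le hq.le hx0.le)
  rw [psiFun_eq_tsum ha0 hb0 hp hq.le hx0 hx1, psiFun_eq_tsum ha0 hb0 hp₁ hq.le hx0 hx1,
    psiFun_eq_tsum ha0 hb0 hp₂ hq.le hx0 hx1,
    mul_rpow_mul_mul_rpow_one_sub (by bound) (hsum_nonneg hp₁) (hsum_nonneg hp₂)]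
  gcongr
  exact tsum_le_tsum_rpow_mul_tsum_rpow hα0 hα1
    (psiTerm_nonneg ha0 hb0 hp₁.le hq.le hx0.le) (psiTerm_nonneg ha0 hb0 hp₂.le hq.le hx0.le)
    (summable_psiTerm ha0 hb0 hp₁.le hq.le hx0.le hx1)
    (summable_psiTerm ha0 hb0 hp₂.le hq.le hx0.le hx1)
    (psiTerm_le_rpow_mul_rpow (by linarith) hb0 hq.le hx0.le hp₁ hp₂ hα0.le hα1.le)
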